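/- Let t ∈ C be n-ary and let t_1, …, t_n be unary operations on X. If t depends on its i-th variable (1 ≤ i ≤ n) and t_i is distracted, then the unary function t(t_1, …, t_n) is distracted. -/

import Mathlib

universe u v

/-- A clone on `X`: a set of finitary operations (of each arity `n + 1 ≥ 1`)
containing all projections and closed under composition. -/
structure Clone (X : Type u) where
  carrier : ∀ n : ℕ, Set ((Fin (n + 1) → X) → X)
  proj_mem : ∀ (n : ℕ) (i : Fin (n + 1)), (fun x => x i) ∈ carrier n
  comp_mem : ∀ {m n : ℕ} (f : (Fin (m + 1) → X) → X)
      (g : Fin (m + 1) → (Fin (n + 1) → X) → X),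
      f ∈ carrier m → (∀ i, g i ∈ carrier n) →
      (fun x => f fun i => g i x) ∈ carrier n

namespace Clone

variable {X : Type u}

theorem carrier_injective : Function.Injective (Clone.carrier (X := X)) := by
  rintro ⟨c, _, _⟩ ⟨d, _, _⟩ h
  simpa using h

instance : PartialOrder (Clone X) where
  le C D := ∀ n, C.carrier n ⊆ D.carrier n
  le_refl _ _ := subset_rfl
  le_trans _ _ _ h₁ h₂ n := (h₁ n).trans (h₂ n)
  le_antisymm _ _ h₁ h₂ :=
    carrier_injective (funext fun n => subset_antisymm (h₁ n) (h₂ n))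

instance : InfSet (Clone X) where
  sInf S :=
    { carrier := fun n => ⋂ C ∈ S, C.carrier n
      proj_mem := fun n i => Set.mem_iInter₂.2 fun C _ => C.proj_mem n i
      comp_mem := fun f g hf hg => Set.mem_iInter₂.2 fun C hC =>
        C.comp_mem f g (Set.mem_iInter₂.1 hf C hC)
          fun i => Set.mem_iInter₂.1 (hg i) C hC }

/-- The lattice `Cl(X)` of all clones on `X` is a complete lattice
(with infima given by intersection). -/
instance : CompleteLattice (Clone X) :=
  completeLatticeOfInf (Clone X) (fun S =>
    ⟨fun C hC n _ hx => Set.mem_iInter₂.1 hx C hC,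
     fun _ hD n _ hx => Set.mem_iInter₂.2 fun C hC => hD hC n hx⟩)

/-- The clone generated by a family `F` of operations:
the smallest clone whose carrier contains `F`. -/
def cloneGen (F : ∀ n : ℕ, Set ((Fin (n + 1) → X) → X)) : Clone X :=
  sInf {C : Clone X | ∀ n, F n ⊆ C.carrier n}

end Clone

attribute [local instance] Classical.propDecidable

noncomputable section Construction

variable {X : Type u} {P : Type v} [SemilatticeSup P]
variable (e0 e1 e2 e4 : X) (Af : P → Set X)

/-- `A = X ∖ {0, 1, 2, 4}`. -/
def Aset : Set X := ({e0, e1, e2, e4} : Set X)ᶜ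

/-- The unary function `φ_p`: the characteristic function of `A_p` on `A`,
fixing `2` and sending `{0, 1, 4}` to `4`. -/
def phi (p : P) (x : X) : X :=
  if x ∈ Af p then e1
  else if x ∈ Aset e0 e1 e2 e4 then e0
  else if x = e2 then e2
  else e4

/-- The ternary function `m_p^{q₁,q₂}`. -/
def mOp (p q1 q2 : P) (x y z : X) : X :=
  if y = phi e0 e1 e2 e4 Af q1 x ∧ z = phi e0 e1 e2 e4 Af q2 x then
    phi e0 e1 e2 e4 Af p x
  else if (x = e2 ∨ y = e2 ∨ z = e2) ∧ y ≠ e1 ∧ y ≠ e4 ∧ z ≠ e1 ∧ z ≠ e4 then e2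
  else e4

/-- `φ_p` as a unary operation (member of arity-1 part of a clone). -/
def phi1 (p : P) : (Fin 1 → X) → X := fun x => phi e0 e1 e2 e4 Af p (x 0)

/-- `m_p^{q₁,q₂}` as a ternary operation. -/
def m3 (p q1 q2 : P) : (Fin 3 → X) → X :=
  fun x => mOp e0 e1 e2 e4 Af p q1 q2 (x 0) (x 1) (x 2)

/-- The family `Φ_Q = {φ_p : p ∈ Q}`, as a family of operations indexed by arity. -/
def PhiFam (Q : Set P) : ∀ n : ℕ, Set ((Fin (n + 1) → X) → X)
  | 0 => {f | ∃ p ∈ Q, f = phi1 e0 e1 e2 e4 Af p}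
  | _ + 1 => ∅

/-- The family `M = {m_p^{q₁,q₂} : p ≤ q₁ ∨ q₂}`, as a family of operations indexed by arity. -/
def MFam : ∀ n : ℕ, Set ((Fin (n + 1) → X) → X)
  | 2 => {f | ∃ p q1 q2 : P, p ≤ q1 ⊔ q2 ∧ f = m3 e0 e1 e2 e4 Af p q1 q2}
  | _ => ∅

/-- The clone `C = ⟨Φ ∪ M⟩`. -/
def CClone : Clone X :=
  Clone.cloneGen fun n => PhiFam e0 e1 e2 e4 Af Set.univ n ∪ MFam e0 e1 e2 e4 Af n

/-- A function depends on its `i`-th variable iff it takes different values on two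
tuples differing only in the `i`-th coordinate. -/
def DependsOnVar {n : ℕ} (t : (Fin n → X) → X) (i : Fin n) : Prop :=
  ∃ a b : Fin n → X, (∀ j, j ≠ i → a j = b j) ∧ t a ≠ t b

/-- A unary function is distracted iff it takes a value in `{2, 4}` somewhere on `A`. -/
def Distracted (f : X → X) : Prop :=
  ∃ a ∈ Aset e0 e1 e2 e4, f a = e2 ∨ f a = e4

/-- The unary function `X → X` corresponding to a unary operation. -/
def toFun1 (u : (Fin 1 → X) → X) : X → X := fun a => u fun _ => a

/-- An `n`-ary member of `C` is unspoilt iff some substitution of unary members of `C`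
into it yields an element of `Φ`. -/
def Unspoilt {n : ℕ} (t : (Fin (n + 1) → X) → X) : Prop :=
  ∃ ts : Fin (n + 1) → (Fin 1 → X) → X,
    (∀ i, ts i ∈ (CClone e0 e1 e2 e4 Af).carrier 0) ∧
    (fun x : Fin 1 → X => t fun i => ts i x) ∈ PhiFam e0 e1 e2 e4 Af Set.univ 0

/-- The family `S` of all spoilt members of `C`. -/
def SpoiltFam (n : ℕ) : Set ((Fin (n + 1) → X) → X) :=
  {t | t ∈ (CClone e0 e1 e2 e4 Af).carrier n ∧ ¬ Unspoilt e0 e1 e2 e4 Af t}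

/-- The clone `C_I = ⟨Φ_I ∪ M ∪ S⟩`. -/
def CI (I : Set P) : Clone X :=
  Clone.cloneGen fun n =>
    PhiFam e0 e1 e2 e4 Af I n ∪ MFam e0 e1 e2 e4 Af n ∪ SpoiltFam e0 e1 e2 e4 Af n

end Construction

/-- An ideal of a join-semilattice: a downward closed subset closed under finite joins. -/
def IsIdealP {P : Type v} [SemilatticeSup P] (I : Set P) : Prop :=
  (∀ p q : P, p ≤ q → q ∈ I → p ∈ I) ∧ ∀ p q : P, p ∈ I → q ∈ I → p ⊔ q ∈ I

/-- The ideal of `P` generated by a subset `I`. -/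
def idealGen {P : Type v} [SemilatticeSup P] (I : Set P) : Set P :=
  ⋂₀ {J : Set P | IsIdealP J ∧ I ⊆ J}

/-! The operations that send a tuple into `S = {2, 4}` as soon as one of their essential
variables takes a value in `S` form a clone: in a composition `f (g₀, …, gₘ)` depending on
its `i`-th variable, some essential variable `j` of `f` has `gⱼ` depending on its `i`-th variable.
Every `φ_p` and every `m_p^{q₁,q₂}` maps any tuple with an entry in `S` into `S`, because
`φ_q x ∈ S` exactly when `x ∉ A`. Hence every member of `C` lies in this clone. -/

namespace Clone

variable {X : Type u}

theorem cloneGen_le {F : ∀ n : ℕ, Set ((Fin (n + 1) → X) → X)} {C : Clone X}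
    (h : ∀ n, F n ⊆ C.carrier n) : cloneGen F ≤ C :=
  sInf_le h

theorem exists_dependsOnVar_of_ne_of_eqOn_compl {n : ℕ} (f : (Fin n → X) → X)
    (v : Fin n → X) (s : Finset (Fin n)) :
    ∀ u : Fin n → X, (∀ j ∉ s, u j = v j) → f u ≠ f v →
      ∃ j, u j ≠ v j ∧ DependsOnVar f j := by
  induction s using Finset.induction_on with
  | empty =>
    intro u hu hne
    exact absurd (congrArg f (funext fun j => hu j (Finset.notMem_empty j))) hne
  | @insert j s hj ih =>
    intro u hu hne
    by_cases hfu : f u = f (Function.update u j (v j))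
    · have hu' : ∀ k ∉ s, Function.update u j (v j) k = v k := fun k hk => by
        by_cases hkj : k = j
        · subst hkj; simp
        · rw [Function.update_of_ne hkj]
          exact hu k (by simp [hkj, hk])
      obtain ⟨k, hkv, hdep⟩ := ih _ hu' (hfu ▸ hne)
      have hkj : k ≠ j := by rintro rfl; simp at hkv
      exact ⟨k, by rwa [Function.update_of_ne hkj] at hkv, hdep⟩
    · refine ⟨j, fun h => hfu (by rw [← h, Function.update_eq_self]), u, _,
        fun k hk => (Function.update_of_ne hk _ _).symm, hfu⟩

theorem exists_dependsOnVar_of_ne {n : ℕ} {f : (Fin n → X) → X} {u v : Fin n → X}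
    (h : f u ≠ f v) : ∃ j, u j ≠ v j ∧ DependsOnVar f j :=
  exists_dependsOnVar_of_ne_of_eqOn_compl f v Finset.univ u (by simp) h

def absorbing (S : Set X) : Clone X where
  carrier n := {t | ∀ (i : Fin (n + 1)) (x : Fin (n + 1) → X),
    DependsOnVar t i → x i ∈ S → t x ∈ S}
  proj_mem n i := by
    intro j x ⟨a, b, hab, hne⟩ hx
    by_cases hij : i = j
    · exact hij ▸ hx
    · exact absurd (hab i hij) hne
  comp_mem := by
    intro m n f g hf hg i x ⟨a, b, hab, hne⟩ hx
    obtain ⟨j, hj, hfj⟩ := exists_dependsOnVar_of_ne hne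
    exact hf j _ hfj (hg j i x ⟨a, b, hab, hj⟩ hx)

end Clone

section Construction

variable {X : Type u} {P : Type v} {e0 e1 e2 e4 : X} {Af : P → Set X}

theorem phi_mem_pair_iff (h02 : e0 ≠ e2) (h04 : e0 ≠ e4) (h12 : e1 ≠ e2) (h14 : e1 ≠ e4)
    {p : P} (hAf : Af p ⊆ Aset e0 e1 e2 e4) (x : X) :
    phi e0 e1 e2 e4 Af p x ∈ ({e2, e4} : Set X) ↔ x ∉ Aset e0 e1 e2 e4 := by
  unfold phi
  by_cases hx : x ∈ Aset e0 e1 e2 e4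
  · by_cases hxp : x ∈ Af p <;> simp [hx, hxp, h02, h04, h12, h14]
  · have hxp : x ∉ Af p := fun h => hx (hAf h)
    by_cases hx2 : x = e2
    · subst hx2; simp [hx, hxp]
    · simp [hx, hxp, hx2]

theorem notMem_Aset_of_mem_pair {x : X} (hx : x ∈ ({e2, e4} : Set X)) :
    x ∉ Aset e0 e1 e2 e4 := by
  rcases hx with rfl | rfl <;> simp [Aset]

theorem phiFam_subset_absorbing (h02 : e0 ≠ e2) (h04 : e0 ≠ e4) (h12 : e1 ≠ e2)
    (h14 : e1 ≠ e4) (hAf : ∀ p, Af p ⊆ Aset e0 e1 e2 e4) (Q : Set P) :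
    ∀ n, PhiFam e0 e1 e2 e4 Af Q n ⊆ (Clone.absorbing {e2, e4}).carrier n
  | 0, _, ⟨p, _, rfl⟩ => fun j x _ hx =>
    (phi_mem_pair_iff h02 h04 h12 h14 (hAf p) (x 0)).2
      (notMem_Aset_of_mem_pair (Fin.fin_one_eq_zero j ▸ hx))
  | _ + 1, _, hf => hf.elim

variable [SemilatticeSup P]

theorem mFam_subset_absorbing (h02 : e0 ≠ e2) (h04 : e0 ≠ e4) (h12 : e1 ≠ e2)
    (h14 : e1 ≠ e4) (hAf : ∀ p, Af p ⊆ Aset e0 e1 e2 e4) :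
    ∀ n, MFam e0 e1 e2 e4 Af n ⊆ (Clone.absorbing {e2, e4}).carrier n
  | 2, _, ⟨p, q1, q2, _, rfl⟩ => by
    have hphi := fun q => phi_mem_pair_iff h02 h04 h12 h14 (hAf q)
    intro j x _ hx
    show mOp e0 e1 e2 e4 Af p q1 q2 (x 0) (x 1) (x 2) ∈ ({e2, e4} : Set X)
    unfold mOp
    split_ifs with hq
    · refine (hphi p (x 0)).2 ?_
      fin_cases j
      · exact notMem_Aset_of_mem_pair hx
      · exact (hphi q1 (x 0)).1 (hq.1 ▸ hx)
      · exact (hphi q2 (x 0)).1 (hq.2 ▸ hx)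
    · exact Or.inl rfl
    · exact Or.inr rfl
  | 0, _, hf | 1, _, hf | _ + 3, _, hf => hf.elim

theorem CClone_le_absorbing (h02 : e0 ≠ e2) (h04 : e0 ≠ e4) (h12 : e1 ≠ e2)
    (h14 : e1 ≠ e4) (hAf : ∀ p, Af p ⊆ Aset e0 e1 e2 e4) :
    CClone e0 e1 e2 e4 Af ≤ Clone.absorbing {e2, e4} :=
  Clone.cloneGen_le fun n => Set.union_subset
    (phiFam_subset_absorbing h02 h04 h12 h14 hAf _ n)
    (mFam_subset_absorbing h02 h04 h12 h14 hAf n)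

end Construction

theorem insert_distracted_general
    {X : Type u} {P : Type v} [SemilatticeSup P]
    (e0 e1 e2 e4 : X)
    (hdist : e0 ≠ e1 ∧ e0 ≠ e2 ∧ e0 ≠ e4 ∧ e1 ≠ e2 ∧ e1 ≠ e4 ∧ e2 ≠ e4)
    (Af : P → Set X) (hAf : ∀ p : P, Af p ⊆ Aset e0 e1 e2 e4)
    (n : ℕ) (t : (Fin (n + 1) → X) → X)
    (ht : t ∈ (CClone e0 e1 e2 e4 Af).carrier n)
    (ts : Fin (n + 1) → X → X) (i : Fin (n + 1))
    (hdep : DependsOnVar t i) (hdistr : Distracted e0 e1 e2 e4 (ts i)) :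
    Distracted e0 e1 e2 e4 (fun a => t fun j => ts j a) := by
  obtain ⟨-, h02, h04, h12, h14, -⟩ := hdist
  obtain ⟨a, ha, hta⟩ := hdistr
  exact ⟨a, ha, CClone_le_absorbing h02 h04 h12 h14 hAf n ht i (fun j => ts j a) hdep hta⟩

/-- Lemma 2: substituting a distracted unary function for a variable on which a member
of `C` depends yields a distracted function. -/
theorem insert_distracted
    {X : Type u} {P : Type v} [Infinite X] [SemilatticeSup P]
    (e0 e1 e2 e4 : X)
    (hdist : e0 ≠ e1 ∧ e0 ≠ e2 ∧ e0 ≠ e4 ∧ e1 ≠ e2 ∧ e1 ≠ e4 ∧ e2 ≠ e4)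
    (hcard : Cardinal.lift.{u} (Cardinal.mk P) ≤ Cardinal.lift.{v} (2 ^ Cardinal.mk X))
    (Af : P → Set X) (hAf : ∀ p : P, Af p ⊆ Aset e0 e1 e2 e4)
    (hcover : ∀ (p : P) (k : ℕ) (q : Fin k → P),
      (∀ i, p ≠ q i) → ¬ Af p ⊆ ⋃ i, Af (q i))
    (n : ℕ) (t : (Fin (n + 1) → X) → X)
    (ht : t ∈ (CClone e0 e1 e2 e4 Af).carrier n)
    (ts : Fin (n + 1) → X → X) (i : Fin (n + 1))
    (hdep : DependsOnVar t i) (hdistr : Distracted e0 e1 e2 e4 (ts i)) :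
    Distracted e0 e1 e2 e4 (fun a => t fun j => ts j a) :=
  insert_distracted_general e0 e1 e2 e4 hdist Af hAf n t ht ts i hdep hdistr
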